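/- Suppose γ̃ = (μ, U) : [0,L] → Δ̊(n) × O(n) is smooth and minimizes the energy E_{g̃} among smooth paths with the same endpoints. Then, writing B(t) = U(t)^T U′(t) and C(t) the skew-symmetric matrix with entries c_{ij}(t) = f(μ_{i→j}(t))² b_{ij}(t) for i < j, the quantity U(t) C(t) U(t)^T is constant in t; equivalently, U′ = U B with b_{ij}(t) = f(μ_{i→j}(t))^{−2} (U(t)^T U(0) C(0) U(0)^T U(t))_{ij} for all 1 ≤ i < j ≤ n and all t ∈ [0,L]. -/

import Mathlib

open Matrix Filter Topology

/-- The real orthogonal group `O(n)`. -/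
abbrev OG (n : ℕ) := Matrix.orthogonalGroup (Fin n) ℝ

/-- The truncated weight vector `μ_{i→j}` (`0`-based indices). -/
def trunc {n : ℕ} (μ : Fin n → ℝ) (i j : Fin n) : Fin n → ℝ :=
  fun l => if (i : ℕ) ≤ (l : ℕ) ∧ (l : ℕ) < (j : ℕ) then μ l else 0

/-- Standing hypotheses on the pinching function `f : [0,1]^n → ℝ₊`. -/
def PinchFun {n : ℕ} (f : (Fin n → ℝ) → ℝ) : Prop :=
  ContinuousOn f (Set.Icc (0 : Fin n → ℝ) 1) ∧
  ContDiffOn ℝ (⊤ : ℕ∞) f (Set.Icc (0 : Fin n → ℝ) 1 \ {0}) ∧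
  (∀ x ∈ Set.Icc (0 : Fin n → ℝ) 1, 0 ≤ f x) ∧
  (∀ x ∈ Set.Icc (0 : Fin n → ℝ) 1, (f x = 0 ↔ x = 0))

/-- The partial derivative `∂_l f` of `f` in the `l`-th coordinate direction. -/
noncomputable def pd {n : ℕ} (f : (Fin n → ℝ) → ℝ) (x : Fin n → ℝ) (l : Fin n) : ℝ :=
  fderiv ℝ f x (Pi.single l 1)

/-- The entry `b_{ij}(t) = (U(t)ᵀ U′(t))_{ij}` of the velocity of a path in `O(n)`
(derivatives within `[0, L]`). -/
noncomputable def bGeo {n : ℕ} (L : ℝ) (U : ℝ → OG n) (t : ℝ) (i j : Fin n) : ℝ :=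
  ∑ l : Fin n, (U t : Matrix (Fin n) (Fin n) ℝ) l i *
    derivWithin (fun s => (U s : Matrix (Fin n) (Fin n) ℝ) l j) (Set.Icc 0 L) t

/-- A smooth path `(μ, U) : [0, L] → Δ̊(n) × O(n)`. -/
def SmoothPathIn {n : ℕ} (L : ℝ) (μ : ℝ → Fin n → ℝ) (U : ℝ → OG n) : Prop :=
  ContDiffOn ℝ (⊤ : ℕ∞) μ (Set.Icc 0 L) ∧
  ContDiffOn ℝ (⊤ : ℕ∞) (fun t k l => (U t : Matrix (Fin n) (Fin n) ℝ) k l) (Set.Icc 0 L) ∧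
  ∀ t ∈ Set.Icc (0 : ℝ) L, (∀ k, 0 < μ t k ∧ μ t k < 1) ∧ ∑ k, μ t k = 1

/-- The energy `E_{g̃}` of a path `(μ, U)` for the lifted metric `g̃` on
`Δ̊(n) × O(n)`:
`E = (1/2) ∫₀ᴸ |μ′(t)|² + ∑_{i<j} f(μ_{i→j}(t))² (U(t)ᵀU′(t))_{ij}² dt`. -/
noncomputable def energy {n : ℕ} (f : (Fin n → ℝ) → ℝ) (L : ℝ)
    (μ : ℝ → Fin n → ℝ) (U : ℝ → OG n) : ℝ :=
  (1 / 2) * ∫ t in (0 : ℝ)..L,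
    ((∑ k : Fin n, (derivWithin (fun s => μ s k) (Set.Icc 0 L) t)^2) +
      ∑ i : Fin n, ∑ j : Fin n,
        if (i : ℕ) < (j : ℕ) then (f (trunc (μ t) i j))^2 * (bGeo L U t i j)^2 else 0)

/-- `(μ, U)` minimizes the energy among smooth paths with the same endpoints. -/
def IsEnergyMinimizer {n : ℕ} (f : (Fin n → ℝ) → ℝ) (L : ℝ)
    (μ : ℝ → Fin n → ℝ) (U : ℝ → OG n) : Prop :=
  ∀ (ν : ℝ → Fin n → ℝ) (V : ℝ → OG n), SmoothPathIn L ν V →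
    ν 0 = μ 0 → ν L = μ L → V 0 = U 0 → V L = U L →
    energy f L μ U ≤ energy f L ν V

open Classical in
/-- The skew-symmetric matrix `C(t)` with entries
`c_{ij}(t) = f(μ_{i→j}(t))² b_{ij}(t)` for `i < j`. -/
noncomputable def Cmat {n : ℕ} (f : (Fin n → ℝ) → ℝ) (L : ℝ)
    (μ : ℝ → Fin n → ℝ) (U : ℝ → OG n) (t : ℝ) : Matrix (Fin n) (Fin n) ℝ :=
  Matrix.of fun i j =>
    if (i : ℕ) < (j : ℕ) then (f (trunc (μ t) i j))^2 * bGeo L U t i j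
    else if (j : ℕ) < (i : ℕ) then -((f (trunc (μ t) j i))^2 * bGeo L U t j i)
    else 0

namespace GeoFlag
open Matrix

variable {n : ℕ}

noncomputable def Amat (k l : Fin n) : Matrix (Fin n) (Fin n) ℝ :=
  Matrix.single k l 1 - Matrix.single l k 1

noncomputable def A2mat (k l : Fin n) : Matrix (Fin n) (Fin n) ℝ :=
  -(Matrix.single k k 1) - Matrix.single l l 1

lemma transpose_sbm (k l : Fin n) : (Matrix.single k l (1:ℝ))ᵀ = Matrix.single l k 1 := by
  ext i j; simp [Matrix.single, Matrix.transpose_apply, and_comm]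

lemma hAA (k l : Fin n) (hkl : k ≠ l) : Amat k l * Amat k l = A2mat k l := by
  simp [Amat, A2mat, sub_mul, mul_sub, Matrix.single_mul_single_same,
    Matrix.single_mul_single_of_ne, hkl, hkl.symm]
  abel

lemma hAA2 (k l : Fin n) (hkl : k ≠ l) : Amat k l * A2mat k l = -Amat k l := by
  simp [Amat, A2mat, sub_mul, mul_sub, mul_neg, Matrix.single_mul_single_same,
    Matrix.single_mul_single_of_ne, hkl, hkl.symm]

lemma hA2A (k l : Fin n) (hkl : k ≠ l) : A2mat k l * Amat k l = -Amat k l := by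
  simp [Amat, A2mat, sub_mul, mul_sub, neg_mul, Matrix.single_mul_single_same,
    Matrix.single_mul_single_of_ne, hkl, hkl.symm]
  abel

lemma hA2A2 (k l : Fin n) (hkl : k ≠ l) : A2mat k l * A2mat k l = -A2mat k l := by
  simp [Amat, A2mat, sub_mul, mul_sub, neg_mul, mul_neg, Matrix.single_mul_single_same,
    Matrix.single_mul_single_of_ne, hkl, hkl.symm]
  abel

lemma hAT (k l : Fin n) : (Amat k l)ᵀ = -Amat k l := by
  simp [Amat, Matrix.transpose_sub, transpose_sbm]

lemma hA2T (k l : Fin n) : (A2mat k l)ᵀ = A2mat k l := by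
  simp [A2mat, Matrix.transpose_sub, Matrix.transpose_neg, transpose_sbm]

noncomputable def Rm (k l : Fin n) (θ : ℝ) : Matrix (Fin n) (Fin n) ℝ :=
  1 + Real.sin θ • Amat k l + (1 - Real.cos θ) • A2mat k l

lemma RmT (k l : Fin n) (θ : ℝ) : (Rm k l θ)ᵀ = Rm k l (-θ) := by
  simp [Rm, Matrix.transpose_add, Matrix.transpose_smul, hAT, hA2T, Real.sin_neg, Real.cos_neg]

lemma Rm_neg_mul (k l : Fin n) (hkl : k ≠ l) (θ : ℝ) : Rm k l (-θ) * Rm k l θ = 1 := by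
  simp only [Rm, Real.sin_neg, Real.cos_neg, mul_add, add_mul, Matrix.mul_smul,
    Matrix.smul_mul, hAA k l hkl, hAA2 k l hkl, hA2A k l hkl, hA2A2 k l hkl,
    one_mul, mul_one, smul_smul, smul_neg]
  match_scalars
  · ring
  · ring
  · linear_combination - Real.sin_sq_add_cos_sq θ

lemma Rm_mul_neg (k l : Fin n) (hkl : k ≠ l) (θ : ℝ) : Rm k l θ * Rm k l (-θ) = 1 := by
  have := Rm_neg_mul k l hkl (-θ); rwa [neg_neg] at this

lemma A_comm_Rm (k l : Fin n) (hkl : k ≠ l) (θ : ℝ) :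
    Amat k l * Rm k l θ = Rm k l θ * Amat k l := by
  simp only [Rm, mul_add, add_mul, Matrix.mul_smul, Matrix.smul_mul,
    hAA k l hkl, hAA2 k l hkl, hA2A k l hkl, one_mul, mul_one]

noncomputable def Rd (k l : Fin n) (θ : ℝ) : Matrix (Fin n) (Fin n) ℝ :=
  Real.cos θ • Amat k l + Real.sin θ • A2mat k l

lemma A_mul_Rm (k l : Fin n) (hkl : k ≠ l) (θ : ℝ) : Amat k l * Rm k l θ = Rd k l θ := by
  simp only [Rm, Rd, mul_add, Matrix.mul_smul, hAA k l hkl, hAA2 k l hkl, mul_one]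
  match_scalars <;> ring

lemma RmT_A_Rm (k l : Fin n) (hkl : k ≠ l) (θ : ℝ) :
    (Rm k l θ)ᵀ * Amat k l * Rm k l θ = Amat k l := by
  rw [RmT, Matrix.mul_assoc, A_comm_Rm k l hkl, ← Matrix.mul_assoc, Rm_neg_mul k l hkl, one_mul]

lemma Rm_zero (k l : Fin n) : Rm k l 0 = 1 := by
  simp [Rm]

lemma Rm_apply (k l : Fin n) (θ : ℝ) (a m : Fin n) :
    Rm k l θ a m = (1 : Matrix (Fin n) (Fin n) ℝ) a m
      + Real.sin θ * Amat k l a m + (1 - Real.cos θ) * A2mat k l a m := by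
  simp [Rm, Matrix.add_apply, Matrix.smul_apply, smul_eq_mul]

/-! ### Path helpers -/

/-- The matrix of the path `U`. -/
def Umat (U : ℝ → OG n) (t : ℝ) : Matrix (Fin n) (Fin n) ℝ := (U t : Matrix (Fin n) (Fin n) ℝ)

/-- The entrywise `derivWithin` of the path `U`. -/
noncomputable def Udmat (L : ℝ) (U : ℝ → OG n) (t : ℝ) : Matrix (Fin n) (Fin n) ℝ :=
  Matrix.of fun m j => derivWithin (fun τ => Umat U τ m j) (Set.Icc 0 L) t

lemma bGeo_eq (L : ℝ) (U : ℝ → OG n) (t : ℝ) (i j : Fin n) :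
    bGeo L U t i j = ((Umat U t)ᵀ * Udmat L U t) i j := by
  simp [bGeo, Matrix.mul_apply, Matrix.transpose_apply, Udmat, Umat]

lemma Uent_cd {L : ℝ} {U : ℝ → OG n}
    (hU : ContDiffOn ℝ (⊤ : ℕ∞) (fun t k l => (U t : Matrix (Fin n) (Fin n) ℝ) k l) (Set.Icc 0 L))
    (m j : Fin n) : ContDiffOn ℝ (⊤ : ℕ∞) (fun t => Umat U t m j) (Set.Icc 0 L) :=
  contDiffOn_pi.1 (contDiffOn_pi.1 hU m) j

lemma Uent_hasD {L : ℝ} {U : ℝ → OG n}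
    (hU : ContDiffOn ℝ (⊤ : ℕ∞) (fun t k l => (U t : Matrix (Fin n) (Fin n) ℝ) k l) (Set.Icc 0 L))
    {t : ℝ} (ht : t ∈ Set.Icc 0 L) (m j : Fin n) :
    HasDerivWithinAt (fun τ => Umat U τ m j) (Udmat L U t m j) (Set.Icc 0 L) t := by
  have := ((Uent_cd hU m j).differentiableOn (by simp) t ht).hasDerivWithinAt
  simpa [Udmat] using this

lemma Uent_deriv_contOn {L : ℝ} (hL : 0 < L) {U : ℝ → OG n}
    (hU : ContDiffOn ℝ (⊤ : ℕ∞) (fun t k l => (U t : Matrix (Fin n) (Fin n) ℝ) k l) (Set.Icc 0 L))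
    (m j : Fin n) :
    ContinuousOn (fun t => derivWithin (fun τ => Umat U τ m j) (Set.Icc 0 L) t) (Set.Icc 0 L) :=
  (ContDiffOn.derivWithin (m := 0) (Uent_cd hU m j) (uniqueDiffOn_Icc hL) (by simp)).continuousOn

end GeoFlag
namespace GeoFlag
open Matrix

variable {n : ℕ}

lemma Rd_apply (k l : Fin n) (θ : ℝ) (a m : Fin n) :
    Rd k l θ a m = Real.cos θ * Amat k l a m + Real.sin θ * A2mat k l a m := by
  simp [Rd, Matrix.add_apply, Matrix.smul_apply, smul_eq_mul]

lemma star_eq (M : Matrix (Fin n) (Fin n) ℝ) : star M = Mᵀ := by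
  ext i j; simp [Matrix.star_apply]

lemma UUT (U : ℝ → OG n) (t : ℝ) : Umat U t * (Umat U t)ᵀ = 1 := by
  have h := (U t).2
  rw [Matrix.mem_orthogonalGroup_iff] at h
  rw [← star_eq]; exact h

lemma UTU (U : ℝ → OG n) (t : ℝ) : (Umat U t)ᵀ * Umat U t = 1 := by
  have h := (U t).2
  rw [Matrix.mem_orthogonalGroup_iff'] at h
  rw [← star_eq]; exact h

/-- Variation of the orthogonal path: `V(t) = R(s φ(t)) U(t)`. -/
noncomputable def Vmat (k l : Fin n) (s : ℝ) (φ : ℝ → ℝ) (U : ℝ → OG n) (t : ℝ) :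
    Matrix (Fin n) (Fin n) ℝ :=
  Rm k l (s * φ t) * Umat U t

lemma Vmat_mem (k l : Fin n) (hkl : k ≠ l) (s : ℝ) (φ : ℝ → ℝ) (U : ℝ → OG n) (t : ℝ) :
    Vmat k l s φ U t ∈ Matrix.orthogonalGroup (Fin n) ℝ := by
  rw [Matrix.mem_orthogonalGroup_iff, Vmat, Matrix.transpose_mul, RmT]
  calc Rm k l (s * φ t) * Umat U t * ((Umat U t)ᵀ * Rm k l (-(s * φ t)))
      = Rm k l (s * φ t) * (Umat U t * (Umat U t)ᵀ) * Rm k l (-(s * φ t)) := by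
        simp only [Matrix.mul_assoc]
    _ = Rm k l (s * φ t) * Rm k l (-(s * φ t)) := by rw [UUT, mul_one]
    _ = 1 := Rm_mul_neg k l hkl _

/-- The variation as a path in `O(n)`. -/
noncomputable def Vpath (k l : Fin n) (hkl : k ≠ l) (s : ℝ) (φ : ℝ → ℝ) (U : ℝ → OG n) :
    ℝ → OG n :=
  fun t => ⟨Vmat k l s φ U t, Vmat_mem k l hkl s φ U t⟩

lemma Vpath_smooth {L : ℝ} {U : ℝ → OG n} (k l : Fin n) (hkl : k ≠ l) (s : ℝ) {φ : ℝ → ℝ}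
    (hφ : ContDiffOn ℝ (⊤ : ℕ∞) φ (Set.Icc 0 L))
    (hU : ContDiffOn ℝ (⊤ : ℕ∞) (fun t k' l' => (U t : Matrix (Fin n) (Fin n) ℝ) k' l') (Set.Icc 0 L)) :
    ContDiffOn ℝ (⊤ : ℕ∞)
      (fun t k' l' => ((Vpath k l hkl s φ U t : Matrix (Fin n) (Fin n) ℝ)) k' l')
      (Set.Icc 0 L) := by
  apply contDiffOn_pi.2; intro a; apply contDiffOn_pi.2; intro b
  have hrw : (fun t => ((Vpath k l hkl s φ U t : Matrix (Fin n) (Fin n) ℝ)) a b)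
      = fun t => ∑ m, Rm k l (s * φ t) a m * Umat U t m b := by
    funext t; exact Matrix.mul_apply
  rw [hrw]
  apply ContDiffOn.sum; intro m _
  have hsφ : ContDiffOn ℝ (⊤ : ℕ∞) (fun t => s * φ t) (Set.Icc 0 L) := contDiffOn_const.mul hφ
  have hRent : ContDiffOn ℝ (⊤ : ℕ∞) (fun t => Rm k l (s * φ t) a m) (Set.Icc 0 L) := by
    have : (fun t => Rm k l (s * φ t) a m)
        = fun t => (1 : Matrix (Fin n) (Fin n) ℝ) a m
          + Real.sin (s * φ t) * Amat k l a m + (1 - Real.cos (s * φ t)) * A2mat k l a m := by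
      funext t; exact Rm_apply k l _ a m
    rw [this]
    exact ((contDiffOn_const.add ((Real.contDiff_sin.comp_contDiffOn hsφ).mul
      contDiffOn_const)).add ((contDiffOn_const.sub
        (Real.contDiff_cos.comp_contDiffOn hsφ)).mul contDiffOn_const))
  exact hRent.mul (Uent_cd hU m b)

lemma Vent_hasD {L : ℝ} {U : ℝ → OG n} (k l : Fin n) (hkl : k ≠ l) (s : ℝ) {φ : ℝ → ℝ}
    (hφ : ContDiffOn ℝ (⊤ : ℕ∞) φ (Set.Icc 0 L))
    (hU : ContDiffOn ℝ (⊤ : ℕ∞) (fun t k' l' => (U t : Matrix (Fin n) (Fin n) ℝ) k' l') (Set.Icc 0 L))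
    {t : ℝ} (ht : t ∈ Set.Icc 0 L) (a j : Fin n) :
    HasDerivWithinAt (fun τ => Vmat k l s φ U τ a j)
      (((s * derivWithin φ (Set.Icc 0 L) t) • (Amat k l * Rm k l (s * φ t) * Umat U t)
        + Rm k l (s * φ t) * Udmat L U t) a j) (Set.Icc 0 L) t := by
  set φd := derivWithin φ (Set.Icc 0 L) t with hφd_def
  have hφd : HasDerivWithinAt φ φd (Set.Icc 0 L) t :=
    ((hφ.differentiableOn (by simp)) t ht).hasDerivWithinAt
  have h1 : HasDerivWithinAt (fun τ => s * φ τ) (s * φd) (Set.Icc 0 L) t := hφd.const_mul s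
  have hsin : HasDerivWithinAt (fun τ => Real.sin (s * φ τ))
      (Real.cos (s * φ t) * (s * φd)) (Set.Icc 0 L) t :=
    h1.sin
  have hcos : HasDerivWithinAt (fun τ => Real.cos (s * φ τ))
      (-Real.sin (s * φ t) * (s * φd)) (Set.Icc 0 L) t :=
    h1.cos
  have hRent : ∀ m : Fin n, HasDerivWithinAt (fun τ => Rm k l (s * φ τ) a m)
      ((s * φd) * Rd k l (s * φ t) a m) (Set.Icc 0 L) t := by
    intro m
    have hfn : (fun τ => Rm k l (s * φ τ) a m)
        = fun τ => (1 : Matrix (Fin n) (Fin n) ℝ) a m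
          + Real.sin (s * φ τ) * Amat k l a m + (1 - Real.cos (s * φ τ)) * A2mat k l a m := by
      funext τ; exact Rm_apply k l _ a m
    rw [hfn]
    have := ((hasDerivWithinAt_const t (Set.Icc 0 L)
        ((1 : Matrix (Fin n) (Fin n) ℝ) a m)).add
      (hsin.mul_const (Amat k l a m))).add
      (((hasDerivWithinAt_const t (Set.Icc 0 L) (1:ℝ)).sub hcos).mul_const (A2mat k l a m))
    refine this.congr_deriv (Eq.symm ?_)
    rw [Rd_apply]
    ring
  have hterm : ∀ m : Fin n, HasDerivWithinAt
      (fun τ => Rm k l (s * φ τ) a m * Umat U τ m j)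
      ((s * φd) * Rd k l (s * φ t) a m * Umat U t m j
        + Rm k l (s * φ t) a m * Udmat L U t m j) (Set.Icc 0 L) t :=
    fun m => (hRent m).mul (Uent_hasD hU ht m j)
  have hfn2 : (fun τ => Vmat k l s φ U τ a j)
      = fun τ => ∑ m, Rm k l (s * φ τ) a m * Umat U τ m j := by
    funext τ; exact Matrix.mul_apply
  rw [hfn2]
  have hsum := HasDerivWithinAt.fun_sum (fun m (_ : m ∈ Finset.univ) => hterm m)
  refine hsum.congr_deriv (Eq.symm ?_)
  rw [Matrix.add_apply, Matrix.smul_apply, Matrix.mul_apply (M := Rm k l (s * φ t)),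
    Matrix.mul_apply (M := Amat k l * Rm k l (s * φ t)), smul_eq_mul, Finset.mul_sum,
    ← Finset.sum_add_distrib]
  apply Finset.sum_congr rfl
  intro m _
  rw [A_mul_Rm k l hkl]
  ring

/-- The infinitesimal rotation matrix conjugated into the frame of `U`. -/
noncomputable def mm (k l : Fin n) (U : ℝ → OG n) (t : ℝ) : Matrix (Fin n) (Fin n) ℝ :=
  (Umat U t)ᵀ * Amat k l * Umat U t

lemma bGeo_Vpath {L : ℝ} (hL : 0 < L) {U : ℝ → OG n} (k l : Fin n) (hkl : k ≠ l) (s : ℝ)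
    {φ : ℝ → ℝ} (hφ : ContDiffOn ℝ (⊤ : ℕ∞) φ (Set.Icc 0 L))
    (hU : ContDiffOn ℝ (⊤ : ℕ∞) (fun t k' l' => (U t : Matrix (Fin n) (Fin n) ℝ) k' l') (Set.Icc 0 L))
    {t : ℝ} (ht : t ∈ Set.Icc 0 L) (i j : Fin n) :
    bGeo L (Vpath k l hkl s φ U) t i j
      = bGeo L U t i j + (s * derivWithin φ (Set.Icc 0 L) t) * mm k l U t i j := by
  have hud : UniqueDiffWithinAt ℝ (Set.Icc (0:ℝ) L) t := uniqueDiffOn_Icc hL t ht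
  set θ := s * φ t
  set φd := derivWithin φ (Set.Icc 0 L) t
  set D : Matrix (Fin n) (Fin n) ℝ :=
    (s * φd) • (Amat k l * Rm k l θ * Umat U t) + Rm k l θ * Udmat L U t with hD_def
  have hder : ∀ a j' : Fin n,
      derivWithin (fun τ => (Vpath k l hkl s φ U τ : Matrix (Fin n) (Fin n) ℝ) a j')
        (Set.Icc 0 L) t = D a j' := by
    intro a j'
    exact (Vent_hasD k l hkl s hφ hU ht a j').derivWithin hud
  have h1 : bGeo L (Vpath k l hkl s φ U) t i j = ((Vmat k l s φ U t)ᵀ * D) i j := by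
    rw [bGeo, Matrix.mul_apply]
    apply Finset.sum_congr rfl
    intro a _
    rw [hder a j, Matrix.transpose_apply]
    rfl
  rw [h1]
  have h2 : (Vmat k l s φ U t)ᵀ * D
      = (s * φd) • ((Umat U t)ᵀ * Amat k l * Umat U t) + (Umat U t)ᵀ * Udmat L U t := by
    rw [hD_def, Vmat, Matrix.transpose_mul, Matrix.mul_add, Matrix.mul_smul]
    congr 1
    · congr 1
      have hconj := congrArg (fun X => (Umat U t)ᵀ * X * Umat U t) (RmT_A_Rm k l hkl θ)
      calc (Umat U t)ᵀ * (Rm k l θ)ᵀ * (Amat k l * Rm k l θ * Umat U t)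
          = (Umat U t)ᵀ * ((Rm k l θ)ᵀ * Amat k l * Rm k l θ) * Umat U t := by
            simp only [Matrix.mul_assoc]
        _ = (Umat U t)ᵀ * Amat k l * Umat U t := by rw [RmT_A_Rm k l hkl θ]
    · calc (Umat U t)ᵀ * (Rm k l θ)ᵀ * (Rm k l θ * Udmat L U t)
          = (Umat U t)ᵀ * ((Rm k l θ)ᵀ * Rm k l θ) * Udmat L U t := by
            simp only [Matrix.mul_assoc]
        _ = (Umat U t)ᵀ * Udmat L U t := by rw [RmT, Rm_neg_mul k l hkl, mul_one]
  rw [h2, Matrix.add_apply, Matrix.smul_apply, smul_eq_mul, ← bGeo_eq, mm]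
  ring

end GeoFlag
namespace GeoFlag
open Matrix

variable {n : ℕ}

/-- The Noether integrand `g(t) = ∑_{i<j} f(μ_{i→j})² b_{ij} m_{ij}`. -/
noncomputable def gfun (f : (Fin n → ℝ) → ℝ) (L : ℝ) (μ : ℝ → Fin n → ℝ) (U : ℝ → OG n)
    (k l : Fin n) (t : ℝ) : ℝ :=
  ∑ i : Fin n, ∑ j : Fin n, if (i : ℕ) < (j : ℕ) then
    (f (trunc (μ t) i j))^2 * bGeo L U t i j * mm k l U t i j else 0

/-- The quadratic integrand `q(t) = ∑_{i<j} f(μ_{i→j})² m_{ij}²`. -/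
noncomputable def qfun (f : (Fin n → ℝ) → ℝ) (L : ℝ) (μ : ℝ → Fin n → ℝ) (U : ℝ → OG n)
    (k l : Fin n) (t : ℝ) : ℝ :=
  ∑ i : Fin n, ∑ j : Fin n, if (i : ℕ) < (j : ℕ) then
    (f (trunc (μ t) i j))^2 * (mm k l U t i j)^2 else 0

section Continuity

variable {f : (Fin n → ℝ) → ℝ} {L : ℝ} {μ : ℝ → Fin n → ℝ} {U : ℝ → OG n}

lemma trunc_mapsTo (hsm : SmoothPathIn L μ U) {t : ℝ} (ht : t ∈ Set.Icc (0:ℝ) L) (i j : Fin n) :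
    trunc (μ t) i j ∈ Set.Icc (0 : Fin n → ℝ) 1 := by
  rw [Set.mem_Icc]
  constructor
  · intro m
    simp only [trunc, Pi.zero_apply]
    split_ifs with h
    · exact le_of_lt ((hsm.2.2 t ht).1 m).1
    · exact le_refl 0
  · intro m
    simp only [trunc, Pi.one_apply]
    split_ifs with h
    · exact le_of_lt ((hsm.2.2 t ht).1 m).2
    · norm_num

lemma trunc_contOn (hsm : SmoothPathIn L μ U) (i j : Fin n) :
    ContinuousOn (fun t => trunc (μ t) i j) (Set.Icc (0:ℝ) L) := by
  apply continuousOn_pi.2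
  intro m
  simp only [trunc]
  split_ifs with h
  · exact (contDiffOn_pi.1 hsm.1 m).continuousOn
  · exact continuousOn_const

lemma f_trunc_contOn (hf : PinchFun f) (hsm : SmoothPathIn L μ U) (i j : Fin n) :
    ContinuousOn (fun t => f (trunc (μ t) i j)) (Set.Icc (0:ℝ) L) :=
  hf.1.comp (trunc_contOn hsm i j) (fun t ht => trunc_mapsTo hsm ht i j)

lemma bGeo_contOn (hL : 0 < L) (hsm : SmoothPathIn L μ U) (i j : Fin n) :
    ContinuousOn (fun t => bGeo L U t i j) (Set.Icc (0:ℝ) L) := by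
  apply continuousOn_finset_sum
  intro m _
  exact ((Uent_cd hsm.2.1 m i).continuousOn).mul (Uent_deriv_contOn hL hsm.2.1 m j)

lemma mm_contOn (hsm : SmoothPathIn L μ U) (k l i j : Fin n) :
    ContinuousOn (fun t => mm k l U t i j) (Set.Icc (0:ℝ) L) := by
  have : (fun t => mm k l U t i j)
      = fun t => ∑ b, (∑ a, Umat U t a i * Amat k l a b) * Umat U t b j := by
    funext t
    rw [mm, Matrix.mul_apply]
    apply Finset.sum_congr rfl; intro b _
    rw [Matrix.mul_apply]
    apply congrArg (· * _) ?_
    apply Finset.sum_congr rfl; intro a _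
    rw [Matrix.transpose_apply]
  rw [this]
  apply continuousOn_finset_sum; intro b _
  exact (continuousOn_finset_sum _ (fun a _ =>
    ((Uent_cd hsm.2.1 a i).continuousOn).mul continuousOn_const)).mul
    (Uent_cd hsm.2.1 b j).continuousOn

lemma gfun_contOn (hf : PinchFun f) (hL : 0 < L) (hsm : SmoothPathIn L μ U) (k l : Fin n) :
    ContinuousOn (gfun f L μ U k l) (Set.Icc (0:ℝ) L) := by
  apply continuousOn_finset_sum; intro i _
  apply continuousOn_finset_sum; intro j _
  split_ifs with h
  · exact (((f_trunc_contOn hf hsm i j).pow 2).mul (bGeo_contOn hL hsm i j)).mul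
      (mm_contOn hsm k l i j)
  · exact continuousOn_const

lemma qfun_contOn (hf : PinchFun f) (hL : 0 < L) (hsm : SmoothPathIn L μ U) (k l : Fin n) :
    ContinuousOn (qfun f L μ U k l) (Set.Icc (0:ℝ) L) := by
  apply continuousOn_finset_sum; intro i _
  apply continuousOn_finset_sum; intro j _
  split_ifs with h
  · exact ((f_trunc_contOn hf hsm i j).pow 2).mul ((mm_contOn hsm k l i j).pow 2)
  · exact continuousOn_const

/-- The base integrand of the energy. -/
noncomputable def baseI (f : (Fin n → ℝ) → ℝ) (L : ℝ) (μ : ℝ → Fin n → ℝ) (U : ℝ → OG n)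
    (t : ℝ) : ℝ :=
  (∑ k : Fin n, (derivWithin (fun s => μ s k) (Set.Icc 0 L) t)^2) +
    ∑ i : Fin n, ∑ j : Fin n,
      if (i : ℕ) < (j : ℕ) then (f (trunc (μ t) i j))^2 * (bGeo L U t i j)^2 else 0

lemma baseI_contOn (hf : PinchFun f) (hL : 0 < L) (hsm : SmoothPathIn L μ U) :
    ContinuousOn (baseI f L μ U) (Set.Icc (0:ℝ) L) := by
  apply ContinuousOn.add
  · apply continuousOn_finset_sum; intro m _
    exact (ContDiffOn.derivWithin (m := 0) (contDiffOn_pi.1 hsm.1 m)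
      (uniqueDiffOn_Icc hL) (by simp)).continuousOn.pow 2
  · apply continuousOn_finset_sum; intro i _
    apply continuousOn_finset_sum; intro j _
    split_ifs with h
    · exact ((f_trunc_contOn hf hsm i j).pow 2).mul ((bGeo_contOn hL hsm i j).pow 2)
    · exact continuousOn_const

lemma φd_contOn (hL : 0 < L) {φ : ℝ → ℝ} (hφ : ContDiffOn ℝ (⊤ : ℕ∞) φ (Set.Icc 0 L)) :
    ContinuousOn (fun t => derivWithin φ (Set.Icc 0 L) t) (Set.Icc (0:ℝ) L) :=
  (ContDiffOn.derivWithin (m := 0) hφ (uniqueDiffOn_Icc hL) (by simp)).continuousOn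

end Continuity

section Energy

variable {f : (Fin n → ℝ) → ℝ} {L : ℝ} {μ : ℝ → Fin n → ℝ} {U : ℝ → OG n}

lemma energy_eq_base (f : (Fin n → ℝ) → ℝ) (L : ℝ) (μ : ℝ → Fin n → ℝ) (U : ℝ → OG n) :
    energy f L μ U = (1/2) * ∫ t in (0:ℝ)..L, baseI f L μ U t := rfl

lemma energy_expand (hf : PinchFun f) (hL : 0 < L) (hsm : SmoothPathIn L μ U)
    (k l : Fin n) (hkl : k ≠ l) (s : ℝ) {φ : ℝ → ℝ}
    (hφ : ContDiffOn ℝ (⊤ : ℕ∞) φ (Set.Icc 0 L)) :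
    energy f L μ (Vpath k l hkl s φ U)
      = energy f L μ U
        + s * (∫ t in (0:ℝ)..L, derivWithin φ (Set.Icc 0 L) t * gfun f L μ U k l t)
        + s^2 * ((1/2) * ∫ t in (0:ℝ)..L,
            (derivWithin φ (Set.Icc 0 L) t)^2 * qfun f L μ U k l t) := by
  have huIcc : Set.uIcc (0:ℝ) L = Set.Icc 0 L := Set.uIcc_of_le hL.le
  have hpoint : ∀ t ∈ Set.uIcc (0:ℝ) L,
      ((∑ m : Fin n, (derivWithin (fun s' => μ s' m) (Set.Icc 0 L) t)^2) +
        ∑ i : Fin n, ∑ j : Fin n,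
          if (i : ℕ) < (j : ℕ) then
            (f (trunc (μ t) i j))^2 * (bGeo L (Vpath k l hkl s φ U) t i j)^2 else 0)
      = baseI f L μ U t
        + (2*s) * (derivWithin φ (Set.Icc 0 L) t * gfun f L μ U k l t)
        + s^2 * ((derivWithin φ (Set.Icc 0 L) t)^2 * qfun f L μ U k l t) := by
    intro t ht
    rw [huIcc] at ht
    set φd := derivWithin φ (Set.Icc 0 L) t
    have hterm : ∀ i j : Fin n,
        (if (i : ℕ) < (j : ℕ) then
          (f (trunc (μ t) i j))^2 * (bGeo L (Vpath k l hkl s φ U) t i j)^2 else 0)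
        = (if (i : ℕ) < (j : ℕ) then
            (f (trunc (μ t) i j))^2 * (bGeo L U t i j)^2 else 0)
          + (2*s) * (φd * (if (i : ℕ) < (j : ℕ) then
              (f (trunc (μ t) i j))^2 * bGeo L U t i j * mm k l U t i j else 0))
          + s^2 * (φd^2 * (if (i : ℕ) < (j : ℕ) then
              (f (trunc (μ t) i j))^2 * (mm k l U t i j)^2 else 0)) := by
      intro i j
      by_cases h : (i : ℕ) < (j : ℕ)
      · simp only [if_pos h, bGeo_Vpath hL k l hkl s hφ hsm.2.1 ht i j]
        ring
      · simp [h]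
    have hsums : (∑ i : Fin n, ∑ j : Fin n,
        if (i : ℕ) < (j : ℕ) then
          (f (trunc (μ t) i j))^2 * (bGeo L (Vpath k l hkl s φ U) t i j)^2 else 0)
        = (∑ i : Fin n, ∑ j : Fin n, if (i : ℕ) < (j : ℕ) then
            (f (trunc (μ t) i j))^2 * (bGeo L U t i j)^2 else 0)
          + (2*s) * (φd * gfun f L μ U k l t)
          + s^2 * (φd^2 * qfun f L μ U k l t) := by
      rw [gfun, qfun]
      simp only [hterm, Finset.sum_add_distrib, ← Finset.mul_sum]
    rw [hsums, baseI]
    ring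
  have hically : ∀ {h : ℝ → ℝ}, ContinuousOn h (Set.Icc 0 L) → IntervalIntegrable h MeasureTheory.volume 0 L := by
    intro h hc
    exact (huIcc ▸ hc).intervalIntegrable
  have hint1 : IntervalIntegrable (baseI f L μ U) MeasureTheory.volume 0 L :=
    hically (baseI_contOn hf hL hsm)
  have hint2 : IntervalIntegrable
      (fun t => derivWithin φ (Set.Icc 0 L) t * gfun f L μ U k l t) MeasureTheory.volume 0 L :=
    hically ((φd_contOn hL hφ).mul (gfun_contOn hf hL hsm k l))
  have hint3 : IntervalIntegrable
      (fun t => (derivWithin φ (Set.Icc 0 L) t)^2 * qfun f L μ U k l t)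
      MeasureTheory.volume 0 L :=
    hically (((φd_contOn hL hφ).pow 2).mul (qfun_contOn hf hL hsm k l))
  have hEV : energy f L μ (Vpath k l hkl s φ U)
      = (1/2) * ∫ t in (0:ℝ)..L,
          (baseI f L μ U t
            + (2*s) * (derivWithin φ (Set.Icc 0 L) t * gfun f L μ U k l t)
            + s^2 * ((derivWithin φ (Set.Icc 0 L) t)^2 * qfun f L μ U k l t)) := by
    rw [energy]
    congr 1
    exact intervalIntegral.integral_congr hpoint
  rw [hEV, intervalIntegral.integral_add (hint1.add (hint2.const_mul (2*s)))
      (hint3.const_mul (s^2)),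
    intervalIntegral.integral_add hint1 (hint2.const_mul (2*s)),
    intervalIntegral.integral_const_mul, intervalIntegral.integral_const_mul,
    energy_eq_base]
  ring

end Energy
end GeoFlag
namespace GeoFlag
open Matrix Polynomial

variable {n : ℕ}

section Variation

variable {f : (Fin n → ℝ) → ℝ} {L : ℝ} {μ : ℝ → Fin n → ℝ} {U : ℝ → OG n}

lemma qfun_nonneg (f : (Fin n → ℝ) → ℝ) (L : ℝ) (μ : ℝ → Fin n → ℝ) (U : ℝ → OG n)
    (k l : Fin n) (t : ℝ) : 0 ≤ qfun f L μ U k l t := by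
  apply Finset.sum_nonneg; intro i _
  apply Finset.sum_nonneg; intro j _
  split_ifs with h
  · exact mul_nonneg (sq_nonneg _) (sq_nonneg _)
  · exact le_refl 0

lemma variational_eq_zero (hf : PinchFun f) (hL : 0 < L) (hsm : SmoothPathIn L μ U)
    (hmin : IsEnergyMinimizer f L μ U) (k l : Fin n) (hkl : k ≠ l) {φ : ℝ → ℝ}
    (hφ : ContDiffOn ℝ (⊤ : ℕ∞) φ (Set.Icc 0 L)) (hφ0 : φ 0 = 0) (hφL : φ L = 0) :
    (∫ t in (0:ℝ)..L, derivWithin φ (Set.Icc 0 L) t * gfun f L μ U k l t) = 0 := by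
  set P := ∫ t in (0:ℝ)..L, derivWithin φ (Set.Icc 0 L) t * gfun f L μ U k l t with hP
  set Q := (1/2) * ∫ t in (0:ℝ)..L,
      (derivWithin φ (Set.Icc 0 L) t)^2 * qfun f L μ U k l t with hQ
  have hQ0 : 0 ≤ Q := by
    rw [hQ]
    apply mul_nonneg (by norm_num)
    apply intervalIntegral.integral_nonneg hL.le
    intro u _
    exact mul_nonneg (sq_nonneg _) (qfun_nonneg f L μ U k l u)
  have key : ∀ s : ℝ, 0 ≤ s * P + s^2 * Q := by
    intro s
    have hend0 : Vpath k l hkl s φ U 0 = U 0 := by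
      apply Subtype.ext
      show Vmat k l s φ U 0 = Umat U 0
      rw [Vmat, hφ0, mul_zero, Rm_zero, one_mul]
    have hendL : Vpath k l hkl s φ U L = U L := by
      apply Subtype.ext
      show Vmat k l s φ U L = Umat U L
      rw [Vmat, hφL, mul_zero, Rm_zero, one_mul]
    have hsmV : SmoothPathIn L μ (Vpath k l hkl s φ U) :=
      ⟨hsm.1, Vpath_smooth k l hkl s hφ hsm.2.1, hsm.2.2⟩
    have hle := hmin μ (Vpath k l hkl s φ U) hsmV rfl rfl hend0 hendL
    rw [energy_expand hf hL hsm k l hkl s hφ] at hle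
    rw [← hP, ← hQ] at hle
    linarith
  have ha : P = (P/(Q+1)) * (Q+1) := by field_simp
  have h := key (-(P/(Q+1)))
  have ha2 : (-(P/(Q+1))) * P + (-(P/(Q+1)))^2 * Q = -(P/(Q+1))^2 := by
    rw [show (-(P/(Q+1))) * P = -(P/(Q+1)) * ((P/(Q+1)) * (Q+1)) from by rw [← ha]]
    ring
  rw [ha2] at h
  have hz : P/(Q+1) = 0 := by
    have h2 : (P/(Q+1))^2 = 0 :=
      le_antisymm (by linarith) (sq_nonneg _)
    exact pow_eq_zero_iff two_ne_zero |>.mp h2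
  rw [ha, hz, zero_mul]

end Variation

section Poly

/-- A polynomial antiderivative. -/
noncomputable def pint (p : ℝ[X]) : ℝ[X] :=
  p.sum fun k a => Polynomial.C (a/(k+1)) * Polynomial.X^(k+1)

lemma pint_deriv (p : ℝ[X]) : (pint p).derivative = p := by
  rw [pint, Polynomial.sum_def, map_sum]
  have hterm : ∀ k ∈ p.support,
      Polynomial.derivative (Polynomial.C (p.coeff k/(k+1)) * Polynomial.X^(k+1))
        = Polynomial.C (p.coeff k) * Polynomial.X^k := by
    intro k _
    rw [Polynomial.derivative_C_mul_X_pow]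
    have h1 : (k + 1 - 1) = k := by omega
    have h2 : (p.coeff k / (↑k+1) * (↑(k+1) : ℝ)) = p.coeff k := by
      push_cast
      have : ((k:ℝ)+1) ≠ 0 := by positivity
      field_simp
    rw [h1, h2]
  rw [Finset.sum_congr rfl hterm]
  conv_rhs => rw [← Polynomial.sum_C_mul_X_pow_eq p]
  rw [Polynomial.sum_def]

lemma poly_contDiffOn (p : ℝ[X]) (s : Set ℝ) :
    ContDiffOn ℝ (⊤ : ℕ∞) (fun x => Polynomial.eval x p) s := by
  apply ContDiff.contDiffOn
  rw [← contDiffOn_univ]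
  exact (AnalyticOnNhd.eval_polynomial (𝕜 := ℝ) p).contDiffOn uniqueDiffOn_univ

lemma poly_derivWithin {L : ℝ} (hL : 0 < L) (p : ℝ[X]) {t : ℝ} (ht : t ∈ Set.Icc (0:ℝ) L) :
    derivWithin (fun x => Polynomial.eval x p) (Set.Icc 0 L) t
      = Polynomial.eval t p.derivative :=
  ((p.hasDerivAt t).hasDerivWithinAt).derivWithin (uniqueDiffOn_Icc hL t ht)

end Poly
end GeoFlag
namespace GeoFlag
open Matrix Polynomial

variable {n : ℕ}

section DuBois

variable {f : (Fin n → ℝ) → ℝ} {L : ℝ} {μ : ℝ → Fin n → ℝ} {U : ℝ → OG n}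

lemma gfun_const (hf : PinchFun f) (hL : 0 < L) (hsm : SmoothPathIn L μ U)
    (hmin : IsEnergyMinimizer f L μ U) (k l : Fin n) (hkl : k ≠ l) :
    ∀ t ∈ Set.Icc (0:ℝ) L, gfun f L μ U k l t = gfun f L μ U k l 0 := by
  set g := gfun f L μ U k l with hg
  have huIcc : Set.uIcc (0:ℝ) L = Set.Icc 0 L := Set.uIcc_of_le hL.le
  have hgc : ContinuousOn g (Set.Icc 0 L) := gfun_contOn hf hL hsm k l
  have hically : ∀ {h : ℝ → ℝ}, ContinuousOn h (Set.Icc 0 L) →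
      IntervalIntegrable h MeasureTheory.volume 0 L := fun hc => (huIcc ▸ hc).intervalIntegrable
  have hgint : IntervalIntegrable g MeasureTheory.volume 0 L := hically hgc
  -- Step 1 : vanishing of the first variation against polynomial test functions
  have step1 : ∀ q : ℝ[X], Polynomial.eval 0 q = 0 → Polynomial.eval L q = 0 →
      (∫ t in (0:ℝ)..L, Polynomial.eval t q.derivative * g t) = 0 := by
    intro q h0 hLe
    have hvar := variational_eq_zero hf hL hsm hmin k l hkl
      (poly_contDiffOn q (Set.Icc 0 L)) h0 hLe
    have hcongr : (∫ t in (0:ℝ)..L, Polynomial.eval t q.derivative * g t)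
        = ∫ t in (0:ℝ)..L, derivWithin (fun x => Polynomial.eval x q) (Set.Icc 0 L) t
            * gfun f L μ U k l t := by
      apply intervalIntegral.integral_congr
      intro t ht
      rw [huIcc] at ht
      show Polynomial.eval t q.derivative * g t
          = derivWithin (fun x => Polynomial.eval x q) (Set.Icc 0 L) t * gfun f L μ U k l t
      rw [poly_derivWithin hL q ht, hg]
    rw [hcongr]
    exact hvar
  -- Step 2 : orthogonality to all polynomials
  set c0 := (∫ t in (0:ℝ)..L, g t)/L with hc0
  have hg_tot : (∫ t in (0:ℝ)..L, g t) = c0 * L := by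
    rw [hc0]; field_simp
  have step2 : ∀ p : ℝ[X], (∫ t in (0:ℝ)..L, Polynomial.eval t p * (g t - c0)) = 0 := by
    intro p
    set r := pint p with hr
    set cp := (Polynomial.eval L r - Polynomial.eval 0 r)/L with hcp
    set q := r - Polynomial.C (Polynomial.eval 0 r) - Polynomial.C cp * Polynomial.X with hqdef
    have hq0 : Polynomial.eval 0 q = 0 := by simp [hqdef]
    have hqL : Polynomial.eval L q = 0 := by
      simp only [hqdef, Polynomial.eval_sub, Polynomial.eval_C, Polynomial.eval_mul,
        Polynomial.eval_X, hcp]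
      field_simp
      ring
    have hqd : q.derivative = p - Polynomial.C cp := by
      rw [hqdef, Polynomial.derivative_sub, Polynomial.derivative_sub,
        Polynomial.derivative_C, Polynomial.derivative_C_mul_X, hr, pint_deriv]
      ring
    have h1 := step1 q hq0 hqL
    rw [hqd] at h1
    have hpc : ContinuousOn (fun t => Polynomial.eval t p) (Set.Icc (0:ℝ) L) :=
      (Polynomial.continuous p).continuousOn
    have hpg_int : IntervalIntegrable (fun t => Polynomial.eval t p * g t)
        MeasureTheory.volume 0 L := hically (hpc.mul hgc)
    have hcg_int : IntervalIntegrable (fun t => cp * g t) MeasureTheory.volume 0 L :=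
      hgint.const_mul cp
    have h2 : (∫ t in (0:ℝ)..L, (Polynomial.eval t p * g t - cp * g t)) = 0 := by
      have hcongr2 : (∫ t in (0:ℝ)..L, (Polynomial.eval t p * g t - cp * g t))
          = ∫ t in (0:ℝ)..L, Polynomial.eval t (p - Polynomial.C cp) * g t := by
        apply intervalIntegral.integral_congr
        intro t _
        simp only [Polynomial.eval_sub, Polynomial.eval_C]
        ring
      rw [hcongr2]
      exact h1
    rw [intervalIntegral.integral_sub hpg_int hcg_int,
      intervalIntegral.integral_const_mul, hg_tot] at h2
    -- FTC for polynomials : ∫ p = cp * L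
    have hftc : (∫ t in (0:ℝ)..L, Polynomial.eval t p) = cp * L := by
      have hda : ∀ t ∈ Set.uIcc (0:ℝ) L, HasDerivAt (fun x => Polynomial.eval x r)
          (Polynomial.eval t p) t := by
        intro t _
        have := r.hasDerivAt t
        rwa [hr, pint_deriv] at this
      rw [intervalIntegral.integral_eq_sub_of_hasDerivAt hda
        (((Polynomial.continuous p).continuousOn).intervalIntegrable)]
      rw [hcp]
      field_simp
    have hsplit : (∫ t in (0:ℝ)..L, Polynomial.eval t p * (g t - c0))
        = (∫ t in (0:ℝ)..L, Polynomial.eval t p * g t)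
          - c0 * ∫ t in (0:ℝ)..L, Polynomial.eval t p := by
      rw [← intervalIntegral.integral_const_mul,
        ← intervalIntegral.integral_sub hpg_int (hically (h := fun t => c0 * Polynomial.eval t p) (continuousOn_const.mul hpc))]
      apply intervalIntegral.integral_congr
      intro t _
      ring
    rw [hsplit, hftc]
    have hpg_val : (∫ t in (0:ℝ)..L, Polynomial.eval t p * g t) = cp * (c0 * L) := by
      linarith
    rw [hpg_val]
    ring
  -- Step 3 : ∫ (g - c0)² = 0 via Weierstrass
  set h : ℝ → ℝ := fun t => g t - c0 with hh
  have hhc : ContinuousOn h (Set.Icc 0 L) := hgc.sub continuousOn_const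
  have hI0 : (0:ℝ) ≤ ∫ t in (0:ℝ)..L, (h t)^2 :=
    intervalIntegral.integral_nonneg hL.le (fun u _ => sq_nonneg _)
  set B := ∫ t in (0:ℝ)..L, |h t| with hB
  have hB0 : 0 ≤ B := intervalIntegral.integral_nonneg hL.le (fun u _ => abs_nonneg _)
  have hIle : ∀ ε : ℝ, 0 < ε → (∫ t in (0:ℝ)..L, (h t)^2) ≤ ε * B := by
    intro ε hε
    obtain ⟨p, hp⟩ := exists_polynomial_near_of_continuousOn 0 L h hhc ε hε
    have hpc : ContinuousOn (fun t => Polynomial.eval t p) (Set.Icc (0:ℝ) L) :=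
      (Polynomial.continuous p).continuousOn
    have hsq_int : IntervalIntegrable (fun t => (h t)^2) MeasureTheory.volume 0 L :=
      hically (hhc.pow 2)
    have hhp_int : IntervalIntegrable (fun t => h t * (h t - Polynomial.eval t p))
        MeasureTheory.volume 0 L := hically (hhc.mul (hhc.sub hpc))
    have hsplit : (∫ t in (0:ℝ)..L, (h t)^2)
        = ∫ t in (0:ℝ)..L, h t * (h t - Polynomial.eval t p) := by
      have hph := step2 p
      have : (∫ t in (0:ℝ)..L, (h t)^2)
          = (∫ t in (0:ℝ)..L, (h t * (h t - Polynomial.eval t p)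
              + Polynomial.eval t p * h t)) := by
        apply intervalIntegral.integral_congr
        intro t _
        ring
      rw [this, intervalIntegral.integral_add hhp_int (hically (h := fun t => Polynomial.eval t p * h t) (hpc.mul hhc))]
      have hph' : (∫ x in (0:ℝ)..L, Polynomial.eval x p * h x) = 0 := by
        simp only [hh]
        exact hph
      rw [hph', add_zero]
    rw [hsplit]
    calc (∫ t in (0:ℝ)..L, h t * (h t - Polynomial.eval t p))
        ≤ |∫ t in (0:ℝ)..L, h t * (h t - Polynomial.eval t p)| := le_abs_self _
      _ ≤ ∫ t in (0:ℝ)..L, |h t * (h t - Polynomial.eval t p)| :=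
          intervalIntegral.abs_integral_le_integral_abs hL.le
      _ ≤ ∫ t in (0:ℝ)..L, ε * |h t| := by
          apply intervalIntegral.integral_mono_on hL.le
            (hically (hhc.mul (hhc.sub hpc)).abs) (hically (continuousOn_const.mul hhc.abs))
          intro t ht
          show |h t * (h t - Polynomial.eval t p)| ≤ ε * |h t|
          rw [abs_mul]
          rw [mul_comm ε]
          apply mul_le_mul_of_nonneg_left _ (abs_nonneg _)
          have := hp t ht
          calc |h t - Polynomial.eval t p| = |Polynomial.eval t p - h t| := abs_sub_comm _ _
            _ ≤ ε := le_of_lt this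
      _ = ε * B := by rw [intervalIntegral.integral_const_mul, hB]
  have hIzero : (∫ t in (0:ℝ)..L, (h t)^2) = 0 := by
    by_contra hne
    have hpos : 0 < ∫ t in (0:ℝ)..L, (h t)^2 := lt_of_le_of_ne hI0 (Ne.symm hne)
    set I := ∫ t in (0:ℝ)..L, (h t)^2 with hIdef
    have hEps : 0 < I/(B+1) := by positivity
    have := hIle (I/(B+1)) hEps
    rw [div_mul_eq_mul_div] at this
    have hlt : I * B / (B + 1) < I := by
      rw [div_lt_iff₀ (by linarith)]
      nlinarith
    linarith
  -- Step 4 : h ≡ 0 on the interval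
  have hzero : ∀ t ∈ Set.Icc (0:ℝ) L, h t = 0 := by
    intro t ht
    by_contra hne
    have hpos : 0 < ∫ x in (0:ℝ)..L, (h x)^2 := by
      apply intervalIntegral.integral_pos hL (hhc.pow 2) (fun x _ => sq_nonneg _)
      refine ⟨t, ht, ?_⟩
      exact lt_of_le_of_ne (sq_nonneg _) (Ne.symm (pow_ne_zero 2 hne))
    rw [hIzero] at hpos
    exact lt_irrefl 0 hpos
  intro t ht
  have h1 := hzero t ht
  have h2 := hzero 0 (Set.mem_Icc.2 ⟨le_refl 0, hL.le⟩)
  rw [hh] at h1 h2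
  simp only at h1 h2
  linarith

end DuBois
end GeoFlag
namespace GeoFlag
open Matrix

variable {n : ℕ} {f : (Fin n → ℝ) → ℝ} {L : ℝ} {μ : ℝ → Fin n → ℝ} {U : ℝ → OG n}

lemma Cmat_lt (f : (Fin n → ℝ) → ℝ) (L : ℝ) (μ : ℝ → Fin n → ℝ) (U : ℝ → OG n) (t : ℝ)
    {i j : Fin n} (hij : (i : ℕ) < (j : ℕ)) :
    Cmat f L μ U t i j = (f (trunc (μ t) i j))^2 * bGeo L U t i j := by
  have hij' : i < j := hij
  simp [Cmat, hij, hij']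

lemma Cmat_diag (f : (Fin n → ℝ) → ℝ) (L : ℝ) (μ : ℝ → Fin n → ℝ) (U : ℝ → OG n) (t : ℝ)
    (i : Fin n) : Cmat f L μ U t i i = 0 := by
  simp [Cmat]

lemma Cmat_anti (f : (Fin n → ℝ) → ℝ) (L : ℝ) (μ : ℝ → Fin n → ℝ) (U : ℝ → OG n) (t : ℝ)
    (i j : Fin n) : Cmat f L μ U t j i = -(Cmat f L μ U t i j) := by
  rcases Nat.lt_trichotomy (i : ℕ) (j : ℕ) with h | h | h
  · have h2 : ¬ (j : ℕ) < (i : ℕ) := by omega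
    have h' : i < j := h
    have h2' : ¬ j < i := h2
    simp [Cmat, h, h2, h', h2']
  · have h2 : i = j := Fin.ext h
    subst h2
    simp [Cmat]
  · have h2 : ¬ (i : ℕ) < (j : ℕ) := by omega
    have h' : j < i := h
    have h2' : ¬ i < j := h2
    simp [Cmat, h, h2, h', h2']

lemma mm_entry (k l : Fin n) (U : ℝ → OG n) (t : ℝ) (i j : Fin n) :
    mm k l U t i j = Umat U t k i * Umat U t l j - Umat U t l i * Umat U t k j := by
  have h1 : mm k l U t i j
      = ∑ b, (∑ a, Umat U t a i * Amat k l a b) * Umat U t b j := by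
    rw [mm, Matrix.mul_apply]
    apply Finset.sum_congr rfl; intro b _
    rw [Matrix.mul_apply]
    apply congrArg (· * _)
    apply Finset.sum_congr rfl; intro a _
    rw [Matrix.transpose_apply]
  rw [h1]
  have h2 : ∀ b, (∑ a, Umat U t a i * Amat k l a b)
      = (if b = l then Umat U t k i else 0) - (if b = k then Umat U t l i else 0) := by
    intro b
    simp only [Amat, Matrix.sub_apply, Matrix.single, Matrix.of_apply, mul_sub,
      Finset.sum_sub_distrib, mul_ite, mul_one, mul_zero, ite_and]
    congr 1
    · rw [Finset.sum_ite_eq Finset.univ k (fun a => if l = b then Umat U t a i else 0)]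
      simp [eq_comm]
    · rw [Finset.sum_ite_eq Finset.univ l (fun a => if k = b then Umat U t a i else 0)]
      simp [eq_comm]
  simp only [h2, sub_mul, ite_mul, zero_mul, Finset.sum_sub_distrib]
  rw [Finset.sum_ite_eq' Finset.univ l (fun b => Umat U t k i * Umat U t b j),
    Finset.sum_ite_eq' Finset.univ k (fun b => Umat U t l i * Umat U t b j)]
  simp

lemma gfun_eq_M (f : (Fin n → ℝ) → ℝ) (L : ℝ) (μ : ℝ → Fin n → ℝ) (U : ℝ → OG n)
    (k l : Fin n) (t : ℝ) :
    gfun f L μ U k l t = (Umat U t * Cmat f L μ U t * (Umat U t)ᵀ) k l := by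
  set C := Cmat f L μ U t with hCdef
  set V := Umat U t with hVdef
  have hRHS : (V * C * Vᵀ) k l = ∑ i : Fin n, ∑ j : Fin n, V k i * C i j * V l j := by
    rw [Matrix.mul_apply]
    have hterm : ∀ j, (V * C) k j * Vᵀ j l = ∑ i, V k i * C i j * V l j := by
      intro j
      rw [Matrix.mul_apply, Matrix.transpose_apply, Finset.sum_mul]
    rw [Finset.sum_congr rfl (fun j _ => hterm j), Finset.sum_comm]
  rw [hRHS]
  set F : Fin n → Fin n → ℝ := fun i j => V k i * C i j * V l j with hF
  have htri : ∀ i j : Fin n, F i j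
      = (if (i:ℕ) < (j:ℕ) then F i j else 0) + (if (j:ℕ) < (i:ℕ) then F i j else 0)
        + (if i = j then F i j else 0) := by
    intro i j
    rcases Nat.lt_trichotomy (i : ℕ) (j : ℕ) with h | h | h
    · have h2 : ¬ i = j := fun he => by rw [he] at h; omega
      have h3 : ¬ (j:ℕ) < (i:ℕ) := by omega
      simp [h, h2, h3]
    · have h2 : i = j := Fin.ext h
      have h3 : ¬ (i:ℕ) < (j:ℕ) := by omega
      have h4 : ¬ (j:ℕ) < (i:ℕ) := by omega
      simp [h2, h3, h4]
    · have h2 : ¬ (i:ℕ) < (j:ℕ) := by omega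
      have h3 : ¬ i = j := fun he => by rw [he] at h; omega
      simp [h, h2, h3]
  have hdiag : (∑ i : Fin n, ∑ j : Fin n, if i = j then F i j else 0) = 0 := by
    apply Finset.sum_eq_zero; intro i _
    rw [Finset.sum_ite_eq Finset.univ i (fun j => F i j)]
    simp [hF, hCdef, Cmat_diag]
  have hswap : (∑ i : Fin n, ∑ j : Fin n, if (j:ℕ) < (i:ℕ) then F i j else 0)
      = ∑ i : Fin n, ∑ j : Fin n, if (i:ℕ) < (j:ℕ) then F j i else 0 := Finset.sum_comm
  have hmain : (∑ i : Fin n, ∑ j : Fin n, F i j)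
      = ∑ i : Fin n, ∑ j : Fin n, (if (i:ℕ) < (j:ℕ) then F i j + F j i else 0) := by
    calc ∑ i : Fin n, ∑ j : Fin n, F i j
        = ∑ i : Fin n, ∑ j : Fin n, ((if (i:ℕ) < (j:ℕ) then F i j else 0)
            + (if (j:ℕ) < (i:ℕ) then F i j else 0) + (if i = j then F i j else 0)) := by
          apply Finset.sum_congr rfl; intro i _
          apply Finset.sum_congr rfl; intro j _
          exact htri i j
      _ = (∑ i : Fin n, ∑ j : Fin n, if (i:ℕ) < (j:ℕ) then F i j else 0)
          + (∑ i : Fin n, ∑ j : Fin n, if (j:ℕ) < (i:ℕ) then F i j else 0)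
          + (∑ i : Fin n, ∑ j : Fin n, if i = j then F i j else 0) := by
          simp only [Finset.sum_add_distrib]
      _ = (∑ i : Fin n, ∑ j : Fin n, if (i:ℕ) < (j:ℕ) then F i j else 0)
          + (∑ i : Fin n, ∑ j : Fin n, if (i:ℕ) < (j:ℕ) then F j i else 0) := by
          rw [hswap, hdiag, add_zero]
      _ = ∑ i : Fin n, ∑ j : Fin n, (if (i:ℕ) < (j:ℕ) then F i j + F j i else 0) := by
          rw [← Finset.sum_add_distrib]
          apply Finset.sum_congr rfl; intro i _
          rw [← Finset.sum_add_distrib]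
          apply Finset.sum_congr rfl; intro j _
          by_cases h : (i:ℕ) < (j:ℕ) <;> simp [h]
  rw [hmain, gfun]
  apply Finset.sum_congr rfl; intro i _
  apply Finset.sum_congr rfl; intro j _
  by_cases h : (i:ℕ) < (j:ℕ)
  · rw [if_pos h, if_pos h]
    have e1 : F j i = -(V k j * C i j * V l i) := by
      simp only [hF]
      rw [hCdef, Cmat_anti f L μ U t i j]
      ring
    have e2 : C i j = (f (trunc (μ t) i j))^2 * bGeo L U t i j := by
      rw [hCdef]; exact Cmat_lt f L μ U t h
    have e3 : mm k l U t i j = V k i * V l j - V l i * V k j := by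
      rw [hVdef]; exact mm_entry k l U t i j
    rw [e1, e3]
    simp only [hF]
    rw [e2]
    ring
  · rw [if_neg h, if_neg h]

end GeoFlag
namespace GeoFlag
open Matrix

variable {n : ℕ}

lemma gfun_diag (f : (Fin n → ℝ) → ℝ) (L : ℝ) (μ : ℝ → Fin n → ℝ) (U : ℝ → OG n)
    (k : Fin n) (t : ℝ) : gfun f L μ U k k t = 0 := by
  apply Finset.sum_eq_zero; intro i _
  apply Finset.sum_eq_zero; intro j _
  split_ifs with h
  · rw [mm_entry]; ring
  · rfl

lemma conj_cancel (W C : Matrix (Fin n) (Fin n) ℝ) (h : Wᵀ * W = 1) :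
    Wᵀ * (W * C * Wᵀ) * W = C := by
  calc Wᵀ * (W * C * Wᵀ) * W = (Wᵀ * W) * C * (Wᵀ * W) := by simp only [Matrix.mul_assoc]
    _ = C := by rw [h, one_mul, mul_one]

end GeoFlag
/-- **Geodesic equations for the flag component** (Proposition
`prop:shortestDeltanOn` (ii)).  If `γ̃ = (μ, U) : [0, L] → Δ̊(n) × O(n)` is smooth
and minimizes the energy `E_{g̃}` among smooth paths with the same endpoints, then,
writing `B(t) = U(t)ᵀU′(t)` and `C(t)` for the skew matrix with entries
`c_{ij}(t) = f(μ_{i→j}(t))² b_{ij}(t)` (`i < j`), the quantity `U(t) C(t) U(t)ᵀ`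
is constant in `t`; equivalently `U′ = U B` with
`b_{ij}(t) = f(μ_{i→j}(t))⁻² (U(t)ᵀ U(0) C(0) U(0)ᵀ U(t))_{ij}` for all `i < j`. -/
theorem geodesic_equation_flag {n : ℕ} (f : (Fin n → ℝ) → ℝ) (hf : PinchFun f)
    (L : ℝ) (hL : 0 < L) (μ : ℝ → Fin n → ℝ) (U : ℝ → OG n)
    (hsm : SmoothPathIn L μ U) (hmin : IsEnergyMinimizer f L μ U) :
    (∀ t ∈ Set.Icc (0 : ℝ) L,
      (U t : Matrix (Fin n) (Fin n) ℝ) * Cmat f L μ U t *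
          (U t : Matrix (Fin n) (Fin n) ℝ)ᵀ =
        (U 0 : Matrix (Fin n) (Fin n) ℝ) * Cmat f L μ U 0 *
          (U 0 : Matrix (Fin n) (Fin n) ℝ)ᵀ) ∧
    (∀ t ∈ Set.Icc (0 : ℝ) L, ∀ i j : Fin n, (i : ℕ) < (j : ℕ) →
      bGeo L U t i j =
        (1 / (f (trunc (μ t) i j))^2) *
          (((U t : Matrix (Fin n) (Fin n) ℝ)ᵀ * (U 0 : Matrix (Fin n) (Fin n) ℝ) *
              Cmat f L μ U 0 * (U 0 : Matrix (Fin n) (Fin n) ℝ)ᵀ *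
              (U t : Matrix (Fin n) (Fin n) ℝ)) i j)) := by
  have h0mem : (0:ℝ) ∈ Set.Icc (0:ℝ) L := Set.mem_Icc.2 ⟨le_refl 0, hL.le⟩
  have hfirst : ∀ t ∈ Set.Icc (0 : ℝ) L,
      (U t : Matrix (Fin n) (Fin n) ℝ) * Cmat f L μ U t *
          (U t : Matrix (Fin n) (Fin n) ℝ)ᵀ =
        (U 0 : Matrix (Fin n) (Fin n) ℝ) * Cmat f L μ U 0 *
          (U 0 : Matrix (Fin n) (Fin n) ℝ)ᵀ := by
    intro t ht
    ext k l
    show (GeoFlag.Umat U t * Cmat f L μ U t * (GeoFlag.Umat U t)ᵀ) k l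
        = (GeoFlag.Umat U 0 * Cmat f L μ U 0 * (GeoFlag.Umat U 0)ᵀ) k l
    rw [← GeoFlag.gfun_eq_M, ← GeoFlag.gfun_eq_M]
    by_cases hkl : k = l
    · subst hkl
      rw [GeoFlag.gfun_diag, GeoFlag.gfun_diag]
    · exact GeoFlag.gfun_const hf hL hsm hmin k l hkl t ht
  refine ⟨hfirst, ?_⟩
  intro t ht i j hij
  have hM := hfirst t ht
  have e1 : ((U t : Matrix (Fin n) (Fin n) ℝ))ᵀ * (U t : Matrix (Fin n) (Fin n) ℝ) = 1 :=
    GeoFlag.UTU U t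
  have hCt : Cmat f L μ U t
      = (U t : Matrix (Fin n) (Fin n) ℝ)ᵀ *
          ((U 0 : Matrix (Fin n) (Fin n) ℝ) * Cmat f L μ U 0 *
            (U 0 : Matrix (Fin n) (Fin n) ℝ)ᵀ) * (U t : Matrix (Fin n) (Fin n) ℝ) := by
    rw [← hM, GeoFlag.conj_cancel _ _ e1]
  have hentry : Cmat f L μ U t i j
      = ((U t : Matrix (Fin n) (Fin n) ℝ)ᵀ *
          ((U 0 : Matrix (Fin n) (Fin n) ℝ) * Cmat f L μ U 0 *
            (U 0 : Matrix (Fin n) (Fin n) ℝ)ᵀ) * (U t : Matrix (Fin n) (Fin n) ℝ)) i j := by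
    rw [← hCt]
  rw [GeoFlag.Cmat_lt f L μ U t hij] at hentry
  have hassoc : ((U t : Matrix (Fin n) (Fin n) ℝ)ᵀ * (U 0 : Matrix (Fin n) (Fin n) ℝ) *
        Cmat f L μ U 0 * (U 0 : Matrix (Fin n) (Fin n) ℝ)ᵀ *
        (U t : Matrix (Fin n) (Fin n) ℝ))
      = ((U t : Matrix (Fin n) (Fin n) ℝ)ᵀ *
          ((U 0 : Matrix (Fin n) (Fin n) ℝ) * Cmat f L μ U 0 *
            (U 0 : Matrix (Fin n) (Fin n) ℝ)ᵀ) * (U t : Matrix (Fin n) (Fin n) ℝ)) := by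
    simp only [Matrix.mul_assoc]
  rw [hassoc, ← hentry]
  have hfne : f (trunc (μ t) i j) ≠ 0 := by
    intro hzero
    have hx := GeoFlag.trunc_mapsTo hsm ht i j
    have htr0 : trunc (μ t) i j = 0 := (hf.2.2.2 _ hx).mp hzero
    have hi := congrFun htr0 i
    have hcond : (i:ℕ) ≤ (i:ℕ) ∧ (i:ℕ) < (j:ℕ) := ⟨le_refl _, hij⟩
    rw [trunc] at hi
    simp only [if_pos hcond, Pi.zero_apply] at hi
    have hpos := ((hsm.2.2 t ht).1 i).1
    linarith
  have h2 : (f (trunc (μ t) i j))^2 ≠ 0 := pow_ne_zero 2 hfne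
  field_simp
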